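/- arXiv:2207.00171 — 4 statements merged into one kernel-verified Lean document; each statement's English description precedes it below -/
import Mathlib

section
/- (Quadratic decay, part i) Let f : Θ → ℝ be C², θ₀ ∈ Θ, with f(θ₀) = 0 and f^[1](θ₀) = 0, where f^[1] = (∂_θ f)/√g and f^[2] = (∂_θ f^[1])/√g for a positive C¹ function g with associated Riemannian distance d. If |f^[2](θ)| ≤ 2δ for all θ in the closed Riemannian ball B(θ₀,r), then |f(θ)| ≤ δ·d(θ,θ₀)² for all θ ∈ B(θ₀,r). -/
/-!
With respect to the arc-length coordinate `G`, `f¹` and `f²` are the first two derivatives of `f`,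
so the claim is Taylor's estimate in that coordinate. It follows by applying twice the fencing
bound: if `du = v dG` with `|v| ≤ c |G - G a| ^ n`, then
`|u b - u a| ≤ c / (n + 1) |G b - G a| ^ (n + 1)`.
-/

open Set

section ArcLengthMeanValue

variable {G s u v : ℝ → ℝ} {c : ℝ} {n : ℕ}

theorem abs_sub_le_of_abs_deriv_le_pow_of_le {a b : ℝ} (hab : a ≤ b)
    (hG : ∀ t, HasDerivAt G (s t) t) (hs : ∀ t, 0 ≤ s t)
    (hu : ∀ t, HasDerivAt u (v t * s t) t)
    (hv : ∀ t ∈ Icc a b, |v t| ≤ c * |G t - G a| ^ n) :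
    |u b - u a| ≤ c / (n + 1) * |G b - G a| ^ (n + 1) := by
  have hGa : ∀ t ∈ Icc a b, 0 ≤ G t - G a := fun t ht =>
    sub_nonneg.2 (monotone_of_hasDerivAt_nonneg hG hs ht.1)
  have hB : ∀ t, HasDerivAt (fun t => c / (n + 1) * (G t - G a) ^ (n + 1))
      (c * (G t - G a) ^ n * s t) t := fun t =>
    ((((hG t).sub_const (G a)).pow (n + 1)).const_mul (c / (n + 1))).congr_deriv (by
      rw [Nat.add_sub_cancel]; push_cast; field_simp)
  have hbound : ∀ t ∈ Ico a b, ‖v t * s t‖ ≤ c * (G t - G a) ^ n * s t := fun t ht => by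
    have ht' := Ico_subset_Icc_self ht
    rw [Real.norm_eq_abs, abs_mul, abs_of_nonneg (hs t), ← abs_of_nonneg (hGa t ht')]
    exact mul_le_mul_of_nonneg_right (hv t ht') (hs t)
  have := image_norm_le_of_norm_deriv_right_le_deriv_boundary (f := fun t => u t - u a)
    (fun t _ => ((hu t).sub_const (u a)).continuousAt.continuousWithinAt)
    (fun t _ => ((hu t).sub_const (u a)).hasDerivWithinAt) (by simp) hB hbound
    ⟨hab, le_rfl⟩
  rwa [Real.norm_eq_abs, ← abs_of_nonneg (hGa b ⟨hab, le_rfl⟩)] at this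

theorem abs_sub_le_of_abs_deriv_le_pow {a b : ℝ}
    (hG : ∀ t, HasDerivAt G (s t) t) (hs : ∀ t, 0 ≤ s t)
    (hu : ∀ t, HasDerivAt u (v t * s t) t)
    (hv : ∀ t ∈ uIcc a b, |v t| ≤ c * |G t - G a| ^ n) :
    |u b - u a| ≤ c / (n + 1) * |G b - G a| ^ (n + 1) := by
  rcases le_total a b with hab | hba
  · exact abs_sub_le_of_abs_deriv_le_pow_of_le hab hG hs hu fun t ht =>
      hv t (Icc_subset_uIcc ht)
  · -- reflect `t ↦ -t`: the arc length becomes `t ↦ -G (-t)`, still nondecreasing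
    have := abs_sub_le_of_abs_deriv_le_pow_of_le (G := fun t => -G (-t)) (s := fun t => s (-t))
      (u := fun t => u (-t)) (v := fun t => -v (-t)) (c := c) (n := n) (neg_le_neg hba)
      (fun t => (((hG (-t)).comp t (hasDerivAt_neg t)).neg).congr_deriv (by ring))
      (fun t => hs (-t))
      (fun t => ((hu (-t)).comp t (hasDerivAt_neg t)).congr_deriv (by ring))
      (fun t ht => by
        have := hv (-t) (Icc_subset_uIcc' ⟨by linarith [ht.2], by linarith [ht.1]⟩)
        simpa [abs_sub_comm, neg_add_eq_sub] using this)
    simpa [abs_sub_comm, neg_add_eq_sub] using this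

end ArcLengthMeanValue

theorem quadratic_decay_i_general
    (g G : ℝ → ℝ)
    (hg_pos : ∀ θ, 0 < g θ) (hg : ContDiff ℝ 1 g)
    (hG : ∀ θ, HasDerivAt G (Real.sqrt (g θ)) θ)
    (f : ℝ → ℝ) (hf : ContDiff ℝ 2 f)
    (θ₀ : ℝ) (r δ : ℝ)
    (hf0 : f θ₀ = 0)
    (hf1 : deriv f θ₀ / Real.sqrt (g θ₀) = 0)
    (hf2 : ∀ θ, |G θ - G θ₀| ≤ r →
      |deriv (fun t => deriv f t / Real.sqrt (g t)) θ / Real.sqrt (g θ)| ≤ 2 * δ) :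
    ∀ θ, |G θ - G θ₀| ≤ r → |f θ| ≤ δ * |G θ - G θ₀| ^ 2 := by
  have hs : ∀ t, 0 < √(g t) := fun t => Real.sqrt_pos.2 (hg_pos t)
  have hf_deriv : ∀ t, HasDerivAt f (deriv f t / √(g t) * √(g t)) t := fun t => by
    rw [div_mul_cancel₀ _ (hs t).ne']
    exact (hf.differentiable two_ne_zero t).hasDerivAt
  have hf1_deriv : ∀ t, HasDerivAt (fun t => deriv f t / √(g t))
      (deriv (fun t => deriv f t / √(g t)) t / √(g t) * √(g t)) t := fun t => by
    rw [div_mul_cancel₀ _ (hs t).ne']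
    have hf' : ContDiff ℝ 1 (deriv f) := hf.deriv'
    exact ((hf'.differentiable one_ne_zero t).div
      ((hg.differentiable one_ne_zero t).sqrt (hg_pos t).ne') (hs t).ne').hasDerivAt
  intro θ hθ
  have hball : ∀ t ∈ uIcc θ₀ θ, |G t - G θ₀| ≤ r := fun t ht =>
    (abs_sub_left_of_mem_uIcc
      ((monotone_of_hasDerivAt_nonneg hG fun t => (hs t).le).mapsTo_uIcc ht)).trans hθ
  have hf1_le : ∀ t ∈ uIcc θ₀ θ, |deriv f t / √(g t)| ≤ 2 * δ * |G t - G θ₀| ^ 1 :=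
    fun t ht => by
      have := abs_sub_le_of_abs_deriv_le_pow (n := 0) hG (fun t => (hs t).le) hf1_deriv
        fun x hx => by simpa using hf2 x (hball x (uIcc_subset_uIcc_left ht hx))
      rwa [hf1, sub_zero, zero_add, Nat.cast_zero, zero_add, div_one] at this
  have := abs_sub_le_of_abs_deriv_le_pow hG (fun t => (hs t).le) hf_deriv hf1_le
  rw [hf0, sub_zero] at this
  convert this using 1
  norm_num

/-- Quadratic decay (part i): if `f(θ₀) = 0`, `f¹(θ₀) = 0` and `|f²| ≤ 2δ` on the Riemannian
ball `B(θ₀,r)`, then `|f(θ)| ≤ δ d(θ,θ₀)²` on `B(θ₀,r)`, where `f¹ = f'/√g`,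
`f² = (f¹)'/√g` and `d(θ,θ') = |G θ − G θ'|` with `G` a primitive of `√g`. -/
theorem quadratic_decay_i
    (g G : ℝ → ℝ)
    (hg_pos : ∀ θ, 0 < g θ) (hg : ContDiff ℝ 1 g)
    (hG : ∀ θ, HasDerivAt G (Real.sqrt (g θ)) θ)
    (f : ℝ → ℝ) (hf : ContDiff ℝ 2 f)
    (θ₀ : ℝ) (r δ : ℝ) (hr : 0 < r) (hδ : 0 < δ)
    (hf0 : f θ₀ = 0)
    (hf1 : deriv f θ₀ / Real.sqrt (g θ₀) = 0)
    (hf2 : ∀ θ, |G θ - G θ₀| ≤ r →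
      |deriv (fun t => deriv f t / Real.sqrt (g t)) θ / Real.sqrt (g θ)| ≤ 2 * δ) :
    ∀ θ, |G θ - G θ₀| ≤ r → |f θ| ≤ δ * |G θ - G θ₀| ^ 2 :=
  quadratic_decay_i_general g G hg_pos hg hG f hf θ₀ r δ hf0 hf1 hf2
end

section
/- (Quadratic decay, part ii) Under the setting of normalized covariant derivatives with positive C¹ metric g, let K be a C² kernel with K^{[2,0]}(θ,θ) = −1, L ≥ sup|K^{[2,0]}| finite, and suppose there exist ε > 0 and r ∈ (0, L^{-1/2}) such that −K^{[2,0]}(θ,θ₀) ≥ ε for all θ in B(θ₀,r). If f is C² with f(θ₀) = v ∈ {−1,1}, f^[1](θ₀) = 0, and |f^[2](θ) − v·K^{[2,0]}(θ,θ₀)| ≤ δ on B(θ₀,r) for some δ ∈ (0,ε), then |f(θ)| ≤ 1 − ((ε−δ)/2)·d(θ,θ₀)² for all θ ∈ B(θ₀,r). -/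
/-!
In the coordinate `s = G θ - G θ₀` (arc length for the metric `g`), the normalized derivatives
`f^[1]`, `f^[2]` are ordinary first and second derivatives, so `v f` starts at `1` with slope `0`
and has second derivative in `[-(L + δ), -(ε - δ)]` on the ball. Comparing with the two parabolas
gives `1 - (L + δ)/2 s² ≤ v f ≤ 1 - (ε - δ)/2 s²`, and `L r² < 1` keeps the lower parabola above
`-(1 - (ε - δ)/2 s²)`.
-/

open Set

lemma isMaxOn_of_hasDerivAt_nonneg_nonpos {S : Set ℝ} (hS : Convex ℝ S) {F F' : ℝ → ℝ}
    {θ₀ : ℝ} (hθ₀ : θ₀ ∈ S) (hF : ∀ t, HasDerivAt F (F' t) t)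
    (hleft : ∀ t ∈ S, t ≤ θ₀ → 0 ≤ F' t) (hright : ∀ t ∈ S, θ₀ ≤ t → F' t ≤ 0) :
    IsMaxOn F S θ₀ := by
  have hcont : Continuous F := continuous_iff_continuousAt.2 fun t => (hF t).continuousAt
  rw [isMaxOn_iff]
  intro θ hθ
  rcases le_total θ θ₀ with h | h
  · refine monotoneOn_of_hasDerivWithinAt_nonneg (hS.inter (convex_Iic θ₀))
      hcont.continuousOn (fun t _ => (hF t).hasDerivWithinAt)
      (fun t ht => ?_) ⟨hθ, h⟩ ⟨hθ₀, self_mem_Iic⟩ h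
    exact hleft t (interior_subset ht).1 (interior_subset ht).2
  · refine antitoneOn_of_hasDerivWithinAt_nonpos (hS.inter (convex_Ici θ₀))
      hcont.continuousOn (fun t _ => (hF t).hasDerivWithinAt)
      (fun t ht => ?_) ⟨hθ₀, self_mem_Ici⟩ ⟨hθ, h⟩ h
    exact hright t (interior_subset ht).1 (interior_subset ht).2

section Reparametrized

variable {S : Set ℝ} {G σ F p q : ℝ → ℝ} {θ₀ : ℝ}

/-- With `G' = σ`, the hypotheses say `dF/dG = p`, `dp/dG = q`: a second-order Taylor bound in
the coordinate `G`. -/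
lemma le_add_half_mul_sq_of_reparam_deriv_le (hS : Convex ℝ S) (hθ₀ : θ₀ ∈ S) {M : ℝ}
    (hG : ∀ t, HasDerivAt G (σ t) t) (hσ : ∀ t, 0 ≤ σ t)
    (hF : ∀ t, HasDerivAt F (σ t * p t) t) (hp : ∀ t, HasDerivAt p (σ t * q t) t)
    (hp₀ : p θ₀ = 0) (hq : ∀ t ∈ S, q t ≤ M) :
    ∀ θ ∈ S, F θ ≤ F θ₀ + M / 2 * (G θ - G θ₀) ^ 2 := by
  set P : ℝ → ℝ := fun t => p t - M * (G t - G θ₀)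
  have hP : ∀ t, HasDerivAt P (σ t * (q t - M)) t := fun t =>
    ((hp t).sub (((hG t).sub_const (G θ₀)).const_mul M)).congr_deriv (by ring)
  have hPanti : AntitoneOn P S :=
    antitoneOn_of_hasDerivWithinAt_nonpos hS
      (fun t _ => (hP t).continuousAt.continuousWithinAt) (fun t _ => (hP t).hasDerivWithinAt)
      (fun t ht => mul_nonpos_of_nonneg_of_nonpos (hσ t) (sub_nonpos.2 (hq t (interior_subset ht))))
  have hP₀ : P θ₀ = 0 := by simp [P, hp₀]
  have hH : ∀ t, HasDerivAt (fun t => F t - M / 2 * (G t - G θ₀) ^ 2) (σ t * P t) t := fun t => by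
    refine ((hF t).sub ((((hG t).sub_const (G θ₀)).pow 2).const_mul (M / 2))).congr_deriv ?_
    simp only [P]; ring
  have hmax := isMaxOn_of_hasDerivAt_nonneg_nonpos hS hθ₀ hH
    (fun t ht h => mul_nonneg (hσ t) (hP₀ ▸ hPanti ht hθ₀ h))
    (fun t ht h => mul_nonpos_of_nonneg_of_nonpos (hσ t) (hP₀ ▸ hPanti hθ₀ ht h))
  intro θ hθ
  have := isMaxOn_iff.1 hmax θ hθ
  norm_num at this
  linarith

lemma add_half_mul_sq_le_of_le_reparam_deriv (hS : Convex ℝ S) (hθ₀ : θ₀ ∈ S) {m : ℝ}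
    (hG : ∀ t, HasDerivAt G (σ t) t) (hσ : ∀ t, 0 ≤ σ t)
    (hF : ∀ t, HasDerivAt F (σ t * p t) t) (hp : ∀ t, HasDerivAt p (σ t * q t) t)
    (hp₀ : p θ₀ = 0) (hq : ∀ t ∈ S, m ≤ q t) :
    ∀ θ ∈ S, F θ₀ + m / 2 * (G θ - G θ₀) ^ 2 ≤ F θ := by
  intro θ hθ
  have := le_add_half_mul_sq_of_reparam_deriv_le (F := -F) (p := -p) (q := -q) hS hθ₀ hG hσ
    (fun t => by simpa using (hF t).neg) (fun t => by simpa using (hp t).neg)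
    (by simp [hp₀]) (fun t ht => neg_le_neg (hq t ht)) θ hθ
  simp only [Pi.neg_apply] at this
  linarith

end Reparametrized

lemma hasDerivAt_const_mul_of_deriv_div {h σ : ℝ → ℝ} {t : ℝ} (c : ℝ)
    (hh : DifferentiableAt ℝ h t) (hσ : σ t ≠ 0) :
    HasDerivAt (fun t => c * h t) (σ t * (c * (deriv h t / σ t))) t := by
  rw [mul_left_comm, mul_div_cancel₀ _ hσ]
  exact hh.hasDerivAt.const_mul c

lemma convex_setOf_abs_sub_le {G : ℝ → ℝ} (hG : Monotone G) (c r : ℝ) :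
    Convex ℝ {t | |G t - c| ≤ r} :=
  ((convex_closedBall c r).ordConnected.preimage_mono hG).convex

lemma mul_sq_lt_one_of_lt_inv_sqrt {L r : ℝ} (hL : 0 < L) (hr : 0 ≤ r)
    (hrL : r < (Real.sqrt L)⁻¹) : L * r ^ 2 < 1 := by
  have h : r ^ 2 < L⁻¹ := by
    rw [← Real.sq_sqrt hL.le, ← inv_pow]
    exact pow_lt_pow_left₀ hrL hr two_ne_zero
  calc L * r ^ 2 < L * L⁻¹ := mul_lt_mul_of_pos_left h hL
    _ = 1 := mul_inv_cancel₀ hL.ne'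

lemma add_mul_sq_lt_two {L ε r s : ℝ} (hε : ε ≤ 1) (hL : 1 ≤ L) (hrL : r < (Real.sqrt L)⁻¹)
    (hs : |s| ≤ r) : (L + ε) * s ^ 2 < 2 := by
  have hLr := mul_sq_lt_one_of_lt_inv_sqrt (by linarith) ((abs_nonneg s).trans hs) hrL
  have hs2 : s ^ 2 ≤ r ^ 2 := sq_abs s ▸ pow_le_pow_left₀ (abs_nonneg s) hs 2
  nlinarith [sq_nonneg s]

lemma abs_mul_sub_eq_abs_sub_mul {v : ℝ} (hv : |v| = 1) (a b : ℝ) :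
    |v * a - b| = |a - v * b| := by
  have hvv : v * v = 1 := by rw [← abs_mul_abs_self, hv, one_mul]
  rw [show v * a - b = v * (a - v * b) by linear_combination b * hvv, abs_mul, hv, one_mul]

lemma abs_le_of_abs_eq_one_of_mul_bounds {v x m M s : ℝ} (hv : |v| = 1)
    (hlo : 1 + m / 2 * s ^ 2 ≤ v * x) (hhi : v * x ≤ 1 + M / 2 * s ^ 2)
    (hgap : -(m + M) * s ^ 2 ≤ 4) : |x| ≤ 1 + M / 2 * s ^ 2 := by
  have hx : |x| = |v * x| := by rw [abs_mul, hv, one_mul]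
  rw [hx, abs_le]
  constructor <;> linarith

theorem quadratic_decay_ii_general
    (g G : ℝ → ℝ)
    (hg_pos : ∀ θ, 0 < g θ) (hg : ContDiff ℝ 1 g)
    (hG : ∀ θ, HasDerivAt G (Real.sqrt (g θ)) θ)
    (K20 : ℝ → ℝ → ℝ)
    (hK20diag : ∀ θ, K20 θ θ = -1)
    (L : ℝ) (hL : ∀ θ θ', |K20 θ θ'| ≤ L)
    (θ₀ : ℝ) (ε r : ℝ)
    (hrL : r < (Real.sqrt L)⁻¹)
    (hconc : ∀ θ, |G θ - G θ₀| ≤ r → ε ≤ - K20 θ θ₀)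
    (f : ℝ → ℝ) (hf : ContDiff ℝ 2 f)
    (v : ℝ) (hv : v = 1 ∨ v = -1)
    (hf0 : f θ₀ = v)
    (hf1 : deriv f θ₀ / Real.sqrt (g θ₀) = 0)
    (δ : ℝ)
    (hf2 : ∀ θ, |G θ - G θ₀| ≤ r →
      |deriv (fun t => deriv f t / Real.sqrt (g t)) θ / Real.sqrt (g θ)
        - v * K20 θ θ₀| ≤ δ) :
    ∀ θ, |G θ - G θ₀| ≤ r → |f θ| ≤ 1 - (ε - δ) / 2 * |G θ - G θ₀| ^ 2 := by
  intro θ hθ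
  set σ : ℝ → ℝ := fun t => Real.sqrt (g t)
  set f₁ : ℝ → ℝ := fun t => deriv f t / σ t
  set f₂ : ℝ → ℝ := fun t => deriv f₁ t / σ t
  set S : Set ℝ := {t | |G t - G θ₀| ≤ r}
  have hσ : ∀ t, 0 < σ t := fun t => Real.sqrt_pos.2 (hg_pos t)
  have hσ₀ : ∀ t, 0 ≤ σ t := fun t => (hσ t).le
  have hf₁ : Differentiable ℝ f₁ := hf.differentiable_deriv_two.div
    (fun t => (hg.differentiable one_ne_zero t).sqrt (hg_pos t).ne') (fun t => (hσ t).ne')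
  have hS : Convex ℝ S :=
    convex_setOf_abs_sub_le (monotone_of_hasDerivAt_nonneg hG hσ₀) _ _
  have hθ₀ : θ₀ ∈ S := by simpa [S] using (abs_nonneg _).trans hθ
  have hv : |v| = 1 := by rcases hv with rfl | rfl <;> norm_num
  have hvf₂ : ∀ t ∈ S, |v * f₂ t - K20 t θ₀| ≤ δ := fun t ht =>
    (abs_mul_sub_eq_abs_sub_mul hv _ _).trans_le (hf2 t ht)
  have hF : ∀ t, HasDerivAt (fun t => v * f t) (σ t * (v * f₁ t)) t := fun t =>
    hasDerivAt_const_mul_of_deriv_div v (hf.differentiable two_ne_zero t) (hσ t).ne'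
  have hp : ∀ t, HasDerivAt (fun t => v * f₁ t) (σ t * (v * f₂ t)) t := fun t =>
    hasDerivAt_const_mul_of_deriv_div v (hf₁ t) (hσ t).ne'
  have hp₀ : v * f₁ θ₀ = 0 := by simp [f₁, σ, hf1]
  have upper := le_add_half_mul_sq_of_reparam_deriv_le hS hθ₀ hG hσ₀ hF hp hp₀
    (M := -(ε - δ)) (fun t ht => by linarith [(abs_le.1 (hvf₂ t ht)).2, hconc t ht]) θ hθ
  have lower := add_half_mul_sq_le_of_le_reparam_deriv hS hθ₀ hG hσ₀ hF hp hp₀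
    (m := -(L + δ)) (fun t ht => by linarith [(abs_le.1 (hvf₂ t ht)).1, (abs_le.1 (hL t θ₀)).1])
    θ hθ
  have hgap : (L + ε) * (G θ - G θ₀) ^ 2 < 2 :=
    add_mul_sq_lt_two (by linarith [hconc θ₀ hθ₀, hK20diag θ₀])
    (by simpa [hK20diag] using hL θ₀ θ₀) hrL hθ
  rw [hf0, ← abs_mul_abs_self, hv, one_mul] at upper lower
  have := abs_le_of_abs_eq_one_of_mul_bounds hv lower upper (by linarith)
  rw [sq_abs]
  linarith

/-- Quadratic decay (part ii): with `K^{[2,0]}(θ,θ) = −1`, `|K^{[2,0]}| ≤ L`,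
`−K^{[2,0]}(·,θ₀) ≥ ε` on the Riemannian ball `B(θ₀,r)` with `0 < r < L^{-1/2}`, if `f` is
`C²` with `f(θ₀) = v ∈ {−1,1}`, `f¹(θ₀) = 0` and `|f² − v K^{[2,0]}(·,θ₀)| ≤ δ` on `B(θ₀,r)`
for some `δ ∈ (0,ε)`, then `|f(θ)| ≤ 1 − ((ε−δ)/2) d(θ,θ₀)²` on `B(θ₀,r)`. -/
theorem quadratic_decay_ii
    (g G : ℝ → ℝ)
    (hg_pos : ∀ θ, 0 < g θ) (hg : ContDiff ℝ 1 g)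
    (hG : ∀ θ, HasDerivAt G (Real.sqrt (g θ)) θ)
    (K20 : ℝ → ℝ → ℝ)
    (hK20diag : ∀ θ, K20 θ θ = -1)
    (L : ℝ) (hL : ∀ θ θ', |K20 θ θ'| ≤ L)
    (θ₀ : ℝ) (ε r : ℝ) (hε : 0 < ε)
    (hr : 0 < r) (hrL : r < (Real.sqrt L)⁻¹)
    (hconc : ∀ θ, |G θ - G θ₀| ≤ r → ε ≤ - K20 θ θ₀)
    (f : ℝ → ℝ) (hf : ContDiff ℝ 2 f)
    (v : ℝ) (hv : v = 1 ∨ v = -1)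
    (hf0 : f θ₀ = v)
    (hf1 : deriv f θ₀ / Real.sqrt (g θ₀) = 0)
    (δ : ℝ) (hδ : 0 < δ) (hδε : δ < ε)
    (hf2 : ∀ θ, |G θ - G θ₀| ≤ r →
      |deriv (fun t => deriv f t / Real.sqrt (g t)) θ / Real.sqrt (g θ)
        - v * K20 θ θ₀| ≤ δ) :
    ∀ θ, |G θ - G θ₀| ≤ r → |f θ| ≤ 1 - (ε - δ) / 2 * |G θ - G θ₀| ^ 2 :=
  quadratic_decay_ii_general g G hg_pos hg hG K20 hK20diag L hL θ₀ ε r hrL hconc f hf v hv hf0 hf1 δ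
    hf2
end

section
/- (Separation comparison) Suppose the Riemannian metrics satisfy d_T ≤ ρ·d_∞ on Θ_T² and max over (i,j) ∈ {0,1}×{0,1,2} of sup over Θ_T² of |K_T^{[i,j]} − K_∞^{[i,j]}| is at most V. Define for δ > 0 the set Θ^s_{T,δ} of s-tuples of points of Θ_T pairwise separated by more than δ in d_T, and δ_T(u,s) = inf{δ > 0 : max_ℓ Σ_{k≠ℓ} |K_T^{[i,j]}(θ_ℓ,θ_k)| ≤ u for all (i,j) ∈ {0,1}×{0,1,2} and all tuples in Θ^s_{T,δ}}, with the analogous definition δ_∞(u,s) using d_∞ and K_∞. Then for every u > 0, with u_T(s) = u + (s−1)V, one has δ_T(u_T(s), s) ≤ ρ·δ_∞(u,s), and Θ^s_{T, ρ·δ_∞(u,s)} ⊆ Θ^s_{T, δ_T(u_T(s), s)}. -/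
/-- Tuples of `s` points of `Θ`, pairwise separated by more than `δ` for the metric `d`. -/
def SepTuples (Θ : Set ℝ) (d : ℝ → ℝ → ℝ) (s : ℕ) (δ : EReal) : Set (Fin s → ℝ) :=
  {θ | (∀ i, θ i ∈ Θ) ∧ ∀ i j : Fin s, i ≠ j → δ < ((d (θ i) (θ j) : ℝ) : EReal)}

/-- The coherence of the dictionary at the tuple `θ` is bounded by `u`, for all derivative
orders `(i,j) ∈ {0,1} × {0,1,2}`. -/
def CohBound (K : ℕ → ℕ → ℝ → ℝ → ℝ) (s : ℕ) (θ : Fin s → ℝ) (u : ℝ) : Prop :=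
  ∀ i ≤ 1, ∀ j ≤ 2, ∀ ℓ : Fin s,
    ∑ k ∈ Finset.univ.erase ℓ, |K i j (θ ℓ) (θ k)| ≤ u

/-- The minimal separation `δ(u,s)` ensuring coherence at most `u` for `s`-tuples
(with the convention `inf ∅ = +∞`). -/
noncomputable def sepDist (Θ : Set ℝ) (d : ℝ → ℝ → ℝ) (K : ℕ → ℕ → ℝ → ℝ → ℝ)
    (s : ℕ) (u : ℝ) : EReal :=
  sInf {δ : EReal | 0 < δ ∧ ∀ θ ∈ SepTuples Θ d s δ, CohBound K s θ u}

/-- Separation comparison: if `d_T ≤ ρ d_∞` on `Θ_T²` and the normalized derivatives of the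
kernels `K_T` and `K_∞` are uniformly `V`-close, then with `u_T(s) = u + (s−1)V`,
`δ_T(u_T(s),s) ≤ ρ δ_∞(u,s)` and `Θ^s_{T,ρδ_∞(u,s)} ⊆ Θ^s_{T,δ_T(u_T(s),s)}`. -/
theorem separation_comparison
    (ΘT : Set ℝ) (hΘT : IsCompact ΘT) (hΘT' : ΘT.OrdConnected)
    (s : ℕ) (hs : 1 ≤ s)
    (KT Kinf : ℕ → ℕ → ℝ → ℝ → ℝ)
    (dT dinf : ℝ → ℝ → ℝ)
    (ρ : ℝ) (hρ : 1 ≤ ρ)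
    (hmetrics : ∀ θ ∈ ΘT, ∀ θ' ∈ ΘT, dT θ θ' ≤ ρ * dinf θ θ')
    (V : ℝ) (hV : 0 ≤ V)
    (hK : ∀ i ≤ 1, ∀ j ≤ 2, ∀ θ ∈ ΘT, ∀ θ' ∈ ΘT,
      |KT i j θ θ' - Kinf i j θ θ'| ≤ V)
    (u : ℝ) (hu : 0 < u) :
    sepDist ΘT dT KT s (u + (s - 1 : ℝ) * V) ≤ (ρ : EReal) * sepDist ΘT dinf Kinf s u ∧
    SepTuples ΘT dT s ((ρ : EReal) * sepDist ΘT dinf Kinf s u)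
      ⊆ SepTuples ΘT dT s (sepDist ΘT dT KT s (u + (s - 1 : ℝ) * V)) := by
  have hρ0 : (0:ℝ) < ρ := lt_of_lt_of_le one_pos hρ
  have hρE : (0:EReal) < (ρ:EReal) := by exact_mod_cast hρ0
  have hρtop : (ρ:EReal) ≠ ⊤ := EReal.coe_ne_top ρ
  -- Key: for every δ in the defining set for K∞, ρ*δ is in the defining set for K_T
  have key : ∀ δ : EReal, (0 < δ ∧ ∀ θ ∈ SepTuples ΘT dinf s δ, CohBound Kinf s θ u) →
      (0 < (ρ:EReal) * δ ∧ ∀ θ ∈ SepTuples ΘT dT s ((ρ:EReal) * δ),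
        CohBound KT s θ (u + (s - 1 : ℝ) * V)) := by
    intro δ ⟨hδ, hδ'⟩
    refine ⟨EReal.mul_pos hρE hδ, ?_⟩
    intro θ ⟨hθmem, hθsep⟩
    have hsep' : θ ∈ SepTuples ΘT dinf s δ := by
      refine ⟨hθmem, fun i j hij => ?_⟩
      by_contra h
      push_neg at h
      have h1 : (ρ:EReal) * ((dinf (θ i) (θ j) : ℝ) : EReal) < ((dT (θ i) (θ j) : ℝ) : EReal) :=
        lt_of_le_of_lt (mul_le_mul_of_nonneg_left h hρE.le) (hθsep i j hij)
      have h2 : (dT (θ i) (θ j) : ℝ) ≤ ρ * dinf (θ i) (θ j) :=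
        hmetrics _ (hθmem i) _ (hθmem j)
      have h3 : ((dT (θ i) (θ j) : ℝ) : EReal) ≤ (ρ:EReal) * ((dinf (θ i) (θ j) : ℝ) : EReal) := by
        rw [← EReal.coe_mul]; exact_mod_cast h2
      exact absurd (h1.trans_le h3) (lt_irrefl _)
    have hcoh := hδ' θ hsep'
    intro i hi j hj ℓ
    calc ∑ k ∈ Finset.univ.erase ℓ, |KT i j (θ ℓ) (θ k)|
        ≤ ∑ k ∈ Finset.univ.erase ℓ, (|Kinf i j (θ ℓ) (θ k)| + V) := by
          refine Finset.sum_le_sum fun k _ => ?_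
          have := hK i hi j hj _ (hθmem ℓ) _ (hθmem k)
          calc |KT i j (θ ℓ) (θ k)|
              = |Kinf i j (θ ℓ) (θ k) + (KT i j (θ ℓ) (θ k) - Kinf i j (θ ℓ) (θ k))| := by
                ring_nf
            _ ≤ |Kinf i j (θ ℓ) (θ k)| + |KT i j (θ ℓ) (θ k) - Kinf i j (θ ℓ) (θ k)| :=
                abs_add_le _ _
            _ ≤ |Kinf i j (θ ℓ) (θ k)| + V := by linarith
      _ = (∑ k ∈ Finset.univ.erase ℓ, |Kinf i j (θ ℓ) (θ k)|)
            + ((Finset.univ.erase ℓ).card : ℝ) * V := by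
          rw [Finset.sum_add_distrib, Finset.sum_const, nsmul_eq_mul]
      _ ≤ u + (s - 1 : ℝ) * V := by
          have hcard : ((Finset.univ.erase ℓ).card : ℝ) = (s:ℝ) - 1 := by
            rw [Finset.card_erase_of_mem (Finset.mem_univ ℓ), Finset.card_univ, Fintype.card_fin]
            have : (1:ℕ) ≤ s := hs
            push_cast [Nat.cast_sub this]
            ring
          rw [hcard]
          exact add_le_add (hcoh i hi j hj ℓ) le_rfl
  -- First part of the conclusion
  have h1 : sepDist ΘT dT KT s (u + (s - 1 : ℝ) * V) ≤ (ρ:EReal) * sepDist ΘT dinf Kinf s u := by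
    rw [← EReal.div_le_iff_le_mul hρE hρtop]
    apply le_sInf
    intro δ hδ
    rw [EReal.div_le_iff_le_mul hρE hρtop]
    exact sInf_le (key δ hδ)
  refine ⟨h1, ?_⟩
  rintro θ ⟨hθmem, hθsep⟩
  exact ⟨hθmem, fun i j hij => lt_of_le_of_lt h1 (hθsep i j hij)⟩
end

section
/- (Coherence bound for the Gaussian kernel) Let M ≥ sup_u max_{0≤i≤3} |P_i(u)|·e^{−u²/4} where P_i are the polynomials with k^{(i)} = P_i·k, k(t)=e^{−t²/2}. For any s ≥ 1, δ > 0 and any s-tuple (θ₁,…,θ_s) of reals pairwise separated by more than δ in the metric d(θ,θ') = |θ−θ'|/(√2σ₀), and for any (i,j) ∈ {0,1}×{0,1,2}: max_ℓ Σ_{k≠ℓ} |K_∞^{[i,j]}(θ_ℓ,θ_k)| ≤ 2M·∫₀^{s/2+1} e^{−t²δ²/4} dt ≤ 2√π·M/δ, using the bound |K_∞^{[i,j]}(θ,θ')| ≤ M·e^{−d(θ,θ')²/2}. -/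
/-!
Rescale so that the points `y_m = θ_m / (√2 σ₀)` are `δ`-separated on the line and `d` is
`|y_ℓ - y_m|`. A window of radius `r` around `y_ℓ` then holds at most `2r/δ` of the other points,
so the `n`-th nearest of them lies at distance at least `nδ/2`. Since `u ↦ e^{-u²/4}` is
decreasing and dominates `e^{-u²/2}`, the sum is bounded by `∑_{n ≥ 1} e^{-(nδ/2)²/4}`, and a
Riemann-sum comparison with step `1/2` bounds that by `2 ∫₀^{s/2} e^{-t²δ²/4} dt`, while
`∫₀^∞ e^{-t²δ²/4} dt = √π/δ`.
-/

open Real Finset MeasureTheory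

theorem card_le_floor_of_pairwise_le_abs_sub {ι : Type*} {x : ι → ℝ} {δ u v : ℝ}
    (hδ : 0 < δ) (hsep : Pairwise fun a b => δ ≤ |x a - x b|) {S : Finset ι}
    (hS : ∀ a ∈ S, x a ∈ Set.Icc u v) : #S ≤ ⌊(v - u) / δ⌋₊ + 1 := by
  have hmaps : ∀ a ∈ S, ⌊(x a - u) / δ⌋₊ ∈ range (⌊(v - u) / δ⌋₊ + 1) := fun a ha => by
    rw [mem_range, Nat.lt_succ_iff]
    gcongr
    exact (hS a ha).2
  have hinj : Set.InjOn (fun a => ⌊(x a - u) / δ⌋₊) S := by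
    intro a ha b hb hab
    by_contra hne
    have hfloor : ∀ c ∈ S, ⌊(x c - u) / δ⌋₊ ≤ (x c - u) / δ ∧
        (x c - u) / δ < ⌊(x c - u) / δ⌋₊ + 1 := fun c hc =>
      ⟨Nat.floor_le (div_nonneg (sub_nonneg.2 (hS c hc).1) hδ.le), Nat.lt_floor_add_one _⟩
    have hab' : (⌊(x a - u) / δ⌋₊ : ℝ) = ⌊(x b - u) / δ⌋₊ := congrArg Nat.cast hab
    have hclose : |(x a - u) / δ - (x b - u) / δ| < 1 := by
      rw [abs_sub_lt_iff]
      constructor <;> linarith [hfloor a ha, hfloor b hb]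
    rw [← sub_div, sub_sub_sub_cancel_right, abs_div, abs_of_pos hδ, div_lt_one hδ] at hclose
    exact (hsep hne).not_gt hclose
  simpa using card_le_card_of_injOn _ hmaps hinj

theorem card_filter_abs_sub_le_of_pairwise_le_abs_sub {ι : Type*} [DecidableEq ι] {x : ι → ℝ}
    {δ r : ℝ} (hδ : 0 < δ) (hr : 0 ≤ r) (hsep : Pairwise fun a b => δ ≤ |x a - x b|)
    {S : Finset ι} {ℓ : ι} (hℓ : ℓ ∉ S) :
    (#{m ∈ S | |x ℓ - x m| ≤ r} : ℝ) ≤ 2 * r / δ := by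
  have hball : ∀ m ∈ insert ℓ {m ∈ S | |x ℓ - x m| ≤ r}, x m ∈ Set.Icc (x ℓ - r) (x ℓ + r) := by
    intro m hm
    rcases mem_insert.1 hm with rfl | hm
    · constructor <;> linarith
    · have := abs_sub_le_iff.1 (mem_filter.1 hm).2
      constructor <;> linarith
  have hcard := card_le_floor_of_pairwise_le_abs_sub hδ hsep hball
  rw [card_insert_of_notMem fun h => hℓ (mem_filter.1 h).1, add_le_add_iff_right,
    add_sub_sub_cancel, ← two_mul] at hcard
  exact (Nat.cast_le.2 hcard).trans (Nat.floor_le (by positivity))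

theorem sum_le_sum_range_of_card_filter_le {ι : Type*} [DecidableEq ι] {f : ℝ → ℝ} {g : ι → ℝ}
    {h : ℝ} (hf : AntitoneOn f (Set.Ici 0)) (hh : 0 < h) (T : Finset ι)
    (hg : ∀ m ∈ T, 0 ≤ g m) (hcard : ∀ r, 0 ≤ r → (#{m ∈ T | g m ≤ r} : ℝ) ≤ r / h) :
    ∑ m ∈ T, f (g m) ≤ ∑ i ∈ range #T, f (h * (i + 1)) := by
  induction T using Finset.induction_on_max_value g with
  | empty => simp
  | insert a T haT hmax ih =>
    have hga : h * (#T + 1) ≤ g a := by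
      have hall : {m ∈ insert a T | g m ≤ g a} = insert a T := filter_true_of_mem fun m hm => by
        rcases mem_insert.1 hm with rfl | hm
        exacts [le_rfl, hmax m hm]
      have := hcard (g a) (hg a (mem_insert_self a T))
      rw [hall, card_insert_of_notMem haT, le_div_iff₀ hh] at this
      push_cast at this
      linarith
    rw [sum_insert haT, card_insert_of_notMem haT, sum_range_succ, add_comm]
    gcongr ?_ + ?_
    · refine ih (fun m hm => hg m (mem_insert_of_mem hm)) fun r hr => ?_
      refine le_trans ?_ (hcard r hr)
      gcongr
      exact subset_insert a T
    · exact hf (Set.mem_Ici.2 (by positivity)) (hg a (mem_insert_self a T)) (by exact_mod_cast hga)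

theorem integral_exp_neg_mul_sq_le {b a : ℝ} (hb : 0 < b) (ha : 0 ≤ a) :
    ∫ t in (0 : ℝ)..a, exp (-b * t ^ 2) ≤ √(π / b) / 2 := by
  rw [intervalIntegral.integral_of_le ha, ← integral_gaussian_Ioi b]
  exact setIntegral_mono_set (integrable_exp_neg_mul_sq hb).integrableOn
    (Filter.Eventually.of_forall fun _ => (exp_pos _).le) Set.Ioc_subset_Ioi_self.eventuallyLE

theorem sum_exp_neg_sq_le_integral {ι : Type*} [DecidableEq ι] {g : ι → ℝ} {δ : ℝ} (hδ : 0 < δ)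
    (T : Finset ι) (hg : ∀ m ∈ T, 0 ≤ g m)
    (hcard : ∀ r, 0 ≤ r → (#{m ∈ T | g m ≤ r} : ℝ) ≤ 2 * r / δ) :
    ∑ m ∈ T, exp (-g m ^ 2 / 2) ≤ 2 * ∫ t in (0 : ℝ)..#T / 2, exp (-t ^ 2 * δ ^ 2 / 4) := by
  set f : ℝ → ℝ := fun u => exp (-u ^ 2 / 4)
  have hf : AntitoneOn f (Set.Ici 0) := fun u hu v _ huv => by
    simp only [f, exp_le_exp]
    have := pow_le_pow_left₀ (Set.mem_Ici.1 hu) huv 2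
    linarith
  have hcard' : ∀ r, 0 ≤ r → (#{m ∈ T | g m ≤ r} : ℝ) ≤ r / (δ / 2) := fun r hr => by
    rw [div_div_eq_mul_div, mul_comm]
    exact hcard r hr
  calc ∑ m ∈ T, exp (-g m ^ 2 / 2)
      ≤ ∑ m ∈ T, f (g m) := by
        gcongr ∑ m ∈ T, ?_ with m hm
        simp only [f, exp_le_exp]
        nlinarith [sq_nonneg (g m)]
    _ ≤ ∑ i ∈ range #T, f (δ / 2 * (i + 1)) :=
        sum_le_sum_range_of_card_filter_le hf (by positivity) T hg hcard'
    _ ≤ ∫ t in (0 : ℝ)..#T, f (δ / 2 * t) := by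
        have hφ : AntitoneOn (fun t => f (δ / 2 * t)) (Set.Ici 0) := fun u hu v hv huv =>
          hf (mul_nonneg (half_pos hδ).le hu) (mul_nonneg (half_pos hδ).le hv) (by gcongr)
        simpa using (hφ.mono Set.Icc_subset_Ici_self).sum_le_integral (x₀ := 0) (a := #T)
    _ = 2 * ∫ t in (0 : ℝ)..#T / 2, exp (-t ^ 2 * δ ^ 2 / 4) := by
        have hsub : ∀ t, f (δ / 2 * t) = exp (-(t / 2) ^ 2 * δ ^ 2 / 4) := fun t => by
          simp only [f]
          ring_nf
        simp_rw [hsub]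
        rw [intervalIntegral.integral_comp_div (fun t => exp (-t ^ 2 * δ ^ 2 / 4)) two_ne_zero,
          zero_div, smul_eq_mul]

theorem integral_exp_neg_sq_mul_sq_div_four_le {δ a : ℝ} (hδ : 0 < δ) (ha : 0 ≤ a) :
    ∫ t in (0 : ℝ)..a, exp (-t ^ 2 * δ ^ 2 / 4) ≤ √π / δ := by
  have hval : √(π / (δ ^ 2 / 4)) / 2 = √π / δ := by
    rw [show π / (δ ^ 2 / 4) = (2 / δ) ^ 2 * π by field_simp; ring,
      sqrt_mul (by positivity), sqrt_sq (by positivity)]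
    ring
  simp_rw [show ∀ t : ℝ, -t ^ 2 * δ ^ 2 / 4 = -(δ ^ 2 / 4) * t ^ 2 from fun t => by ring, ← hval]
  exact integral_exp_neg_mul_sq_le (by positivity) ha

theorem integral_exp_neg_sq_mul_sq_div_four_mono {δ a b : ℝ} (ha : 0 ≤ a) (hab : a ≤ b) :
    ∫ t in (0 : ℝ)..a, exp (-t ^ 2 * δ ^ 2 / 4) ≤ ∫ t in (0 : ℝ)..b, exp (-t ^ 2 * δ ^ 2 / 4) :=
  intervalIntegral.integral_mono_interval le_rfl ha hab
    (Filter.Eventually.of_forall fun _ => (exp_pos _).le)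
    (Continuous.intervalIntegrable (by fun_prop) _ _)

theorem sum_exp_neg_sq_abs_sub_le_integral {ι : Type*} [Fintype ι] [DecidableEq ι] {y : ι → ℝ}
    {δ : ℝ} (hδ : 0 < δ) (hsep : Pairwise fun a b => δ ≤ |y a - y b|) (ℓ : ι) :
    ∑ m ∈ univ.erase ℓ, exp (-|y ℓ - y m| ^ 2 / 2)
      ≤ 2 * ∫ t in (0 : ℝ)..Fintype.card ι / 2, exp (-t ^ 2 * δ ^ 2 / 4) := by
  refine (sum_exp_neg_sq_le_integral hδ _ (fun _ _ => abs_nonneg _) fun r hr =>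
    card_filter_abs_sub_le_of_pairwise_le_abs_sub hδ hr hsep (notMem_erase ℓ univ)).trans ?_
  gcongr 2 * ?_
  refine integral_exp_neg_sq_mul_sq_div_four_mono (by positivity) ?_
  gcongr
  exact_mod_cast card_erase_le.trans (card_le_univ _)

theorem gaussian_coherence_bound_general
    (σ₀ : ℝ) (hσ₀ : 0 < σ₀)
    (K : ℕ → ℕ → ℝ → ℝ → ℝ)
    (d : ℝ → ℝ → ℝ) (hd : ∀ θ θ', d θ θ' = |θ - θ'| / (Real.sqrt 2 * σ₀))
    (M : ℝ)
    (hMbound : ∀ i ≤ 1, ∀ j ≤ 2, ∀ θ θ' : ℝ,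
      |K i j θ θ'| ≤ M * Real.exp (-(d θ θ') ^ 2 / 2))
    (s : ℕ) (δ : ℝ) (hδ : 0 < δ)
    (θ : Fin s → ℝ)
    (hsep : ∀ i j : Fin s, i ≠ j → δ < d (θ i) (θ j)) :
    ∀ i ≤ 1, ∀ j ≤ 2, ∀ ℓ : Fin s,
      (∑ m ∈ Finset.univ.erase ℓ, |K i j (θ ℓ) (θ m)|
          ≤ 2 * M * ∫ t in (0:ℝ)..((s : ℝ) / 2 + 1), Real.exp (-t ^ 2 * δ ^ 2 / 4)) ∧
      2 * M * (∫ t in (0:ℝ)..((s : ℝ) / 2 + 1), Real.exp (-t ^ 2 * δ ^ 2 / 4))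
        ≤ 2 * Real.sqrt π * M / δ := by
  have hM : 0 ≤ M := nonneg_of_mul_nonneg_left
    ((abs_nonneg _).trans (hMbound 0 zero_le_one 0 zero_le_two 0 0)) (exp_pos _)
  set y : Fin s → ℝ := fun m => θ m / (√2 * σ₀)
  have hdy : ∀ a b, d (θ a) (θ b) = |y a - y b| := fun a b => by
    rw [hd, ← sub_div, abs_div, abs_of_pos (by positivity : 0 < √2 * σ₀)]
  have hsep' : Pairwise fun a b => δ ≤ |y a - y b| := fun a b hab => by
    simpa only [hdy] using (hsep a b hab).le
  intro i hi j hj ℓ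
  have hsum : ∑ m ∈ univ.erase ℓ, exp (-d (θ ℓ) (θ m) ^ 2 / 2)
      ≤ 2 * ∫ t in (0 : ℝ)..s / 2 + 1, exp (-t ^ 2 * δ ^ 2 / 4) := by
    simp_rw [hdy]
    refine (sum_exp_neg_sq_abs_sub_le_integral hδ hsep' ℓ).trans ?_
    gcongr 2 * ?_
    exact integral_exp_neg_sq_mul_sq_div_four_mono (by positivity) (by simp)
  constructor
  · calc ∑ m ∈ univ.erase ℓ, |K i j (θ ℓ) (θ m)|
        ≤ ∑ m ∈ univ.erase ℓ, M * exp (-d (θ ℓ) (θ m) ^ 2 / 2) :=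
          sum_le_sum fun m _ => hMbound i hi j hj _ _
      _ ≤ M * (2 * ∫ t in (0 : ℝ)..s / 2 + 1, exp (-t ^ 2 * δ ^ 2 / 4)) := by
          rw [← mul_sum]
          gcongr
      _ = _ := by ring
  · calc 2 * M * (∫ t in (0 : ℝ)..s / 2 + 1, exp (-t ^ 2 * δ ^ 2 / 4))
        ≤ 2 * M * (√π / δ) := by
          gcongr
          exact integral_exp_neg_sq_mul_sq_div_four_le hδ (by positivity)
      _ = _ := by ring

/-- Coherence bound for the Gaussian kernel: with
`K_∞^{[i,j]}(θ,θ') = (−1)^j k^{(i+j)}((θ−θ')/(√2σ₀))`, `k(t) = e^{−t²/2}`,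
`d(θ,θ') = |θ−θ'|/(√2σ₀)`, and `M` a constant with
`|k^{(m)}(u)| ≤ M e^{−u²/4}` for `m ≤ 3` and `|K_∞^{[i,j]}(θ,θ')| ≤ M e^{−d(θ,θ')²/2}`,
any `s`-tuple pairwise `δ`-separated in `d` satisfies, for `(i,j) ∈ {0,1}×{0,1,2}`,
`max_ℓ Σ_{k≠ℓ} |K_∞^{[i,j]}(θ_ℓ,θ_k)| ≤ 2M ∫₀^{s/2+1} e^{−t²δ²/4} dt ≤ 2√π M/δ`. -/
theorem gaussian_coherence_bound
    (σ₀ : ℝ) (hσ₀ : 0 < σ₀)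
    (k : ℝ → ℝ) (hk : ∀ t, k t = Real.exp (-t ^ 2 / 2))
    (K : ℕ → ℕ → ℝ → ℝ → ℝ)
    (hKdef : ∀ i j θ θ', K i j θ θ'
      = (-1 : ℝ) ^ j * iteratedDeriv (i + j) k ((θ - θ') / (Real.sqrt 2 * σ₀)))
    (d : ℝ → ℝ → ℝ) (hd : ∀ θ θ', d θ θ' = |θ - θ'| / (Real.sqrt 2 * σ₀))
    (M : ℝ)
    (hM : ∀ m ≤ 3, ∀ u : ℝ, |iteratedDeriv m k u| ≤ M * Real.exp (-u ^ 2 / 4))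
    (hMbound : ∀ i ≤ 1, ∀ j ≤ 2, ∀ θ θ' : ℝ,
      |K i j θ θ'| ≤ M * Real.exp (-(d θ θ') ^ 2 / 2))
    (s : ℕ) (hs : 1 ≤ s) (δ : ℝ) (hδ : 0 < δ)
    (θ : Fin s → ℝ)
    (hsep : ∀ i j : Fin s, i ≠ j → δ < d (θ i) (θ j)) :
    ∀ i ≤ 1, ∀ j ≤ 2, ∀ ℓ : Fin s,
      (∑ m ∈ Finset.univ.erase ℓ, |K i j (θ ℓ) (θ m)|
          ≤ 2 * M * ∫ t in (0:ℝ)..((s : ℝ) / 2 + 1), Real.exp (-t ^ 2 * δ ^ 2 / 4)) ∧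
      2 * M * (∫ t in (0:ℝ)..((s : ℝ) / 2 + 1), Real.exp (-t ^ 2 * δ ^ 2 / 4))
        ≤ 2 * Real.sqrt π * M / δ :=
  gaussian_coherence_bound_general σ₀ hσ₀ K d hd M hMbound s δ hδ θ hsep
end
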